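/- arXiv:1509.04116 — 2 statements merged into one kernel-verified Lean document; each statement's English description precedes it below -/
import Mathlib

section
/- Let A be a finite nonempty set, (a_j)_{j≥0} a sequence of elements of A, and q, r_1, …, r_n : A → ℝ. Then there exists a strictly increasing sequence (T_ℓ)_{ℓ≥1} of positive integers such that: (i) for every a ∈ A the limit f(a) := lim_{ℓ→∞} (1/T_ℓ) Σ_{j<T_ℓ} 𝟙[a_j = a] exists and is nonnegative; (ii) Σ_{a∈A} f(a) = 1; (iii) Σ_{a∈A} f(a)·q(a) = limsup_{i→∞} (1/i) Σ_{j<i} q(a_j); and (iv) Σ_{a∈A} f(a)·r_k(a) ≥ liminf_{i→∞} (1/i) Σ_{j<i} r_k(a_j) for each 1 ≤ k ≤ n. -/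
/-!
Choose times `x m → ∞` along which the Cesàro averages of `q` tend to their limsup. The vectors
of empirical letter frequencies at these times lie in the compact cube `[0,1]^A`, so along a
further subsequence they converge to some `f`. A Cesàro average of `h ∘ aseq` is the
frequency-weighted sum of `h`, hence along these times it tends to `∑ f a * h a`: for `h = q`
this limit is the limsup, and for `h = r k` it is a subsequential limit, so it bounds the
liminf from above.
-/

open Filter

attribute [local instance] Classical.propDecidable

noncomputable section

namespace Paper

/-- Comparison extremes: limit inferior or limit superior. -/
inductive Ext where
  | inf : Ext
  | sup : Ext

/-- Comparison operators `≥` and `>`. -/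
inductive Cmp where
  | ge : Cmp
  | gt : Cmp

/-- Interpretation of a comparison operator on reals. -/
def Cmp.rel : Cmp → ℝ → ℝ → Prop
  | .ge, x, y => x ≥ y
  | .gt, x, y => x > y

/-- Cesàro averages of a real sequence. -/
def cesaro (q : ℕ → ℝ) (n : ℕ) : ℝ := (∑ j ∈ Finset.range n, q j) / (n : ℝ)

/-- `lr_inf`/`lr_sup`: liminf/limsup of the Cesàro averages. -/
def lr : Ext → (ℕ → ℝ) → ℝ
  | .inf, q => Filter.liminf (cesaro q) Filter.atTop
  | .sup, q => Filter.limsup (cesaro q) Filter.atTop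

/-- Real-valued indicator of a proposition. -/
def ind (P : Prop) : ℝ := if P then 1 else 0

/-- Formulas of frequency LTL (fLTL) over atomic propositions `Ap`,
in negation normal form. -/
inductive FLTL (Ap : Type) where
  | tt : FLTL Ap
  | ff : FLTL Ap
  | atom (a : Ap) : FLTL Ap
  | natom (a : Ap) : FLTL Ap
  | conj (φ ψ : FLTL Ap) : FLTL Ap
  | disj (φ ψ : FLTL Ap) : FLTL Ap
  | next (φ : FLTL Ap) : FLTL Ap
  | fut (φ : FLTL Ap) : FLTL Ap
  | glob (φ : FLTL Ap) : FLTL Ap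
  | untl (φ ψ : FLTL Ap) : FLTL Ap
  | freq (e : Ext) (c : Cmp) (p : ℚ) (φ : FLTL Ap) : FLTL Ap

/-- Infinite words over the alphabet `2^Ap`. -/
abbrev Word (Ap : Type) := ℕ → Set Ap

/-- The suffix `w^k` of an infinite word. -/
def suffixW {Ap : Type} (w : Word Ap) (k : ℕ) : Word Ap := fun i => w (k + i)

/-- Semantics of fLTL: `Sat φ w` means `w ⊨ φ`. -/
def Sat {Ap : Type} : FLTL Ap → Word Ap → Prop
  | .tt, _ => True
  | .ff, _ => False
  | .atom a, w => a ∈ w 0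
  | .natom a, w => a ∉ w 0
  | .conj φ ψ, w => Sat φ w ∧ Sat ψ w
  | .disj φ ψ, w => Sat φ w ∨ Sat ψ w
  | .next φ, w => Sat φ (suffixW w 1)
  | .fut φ, w => ∃ k, Sat φ (suffixW w k)
  | .glob φ, w => ∀ k, Sat φ (suffixW w k)
  | .untl φ ψ, w => ∃ k, Sat ψ (suffixW w k) ∧ ∀ j < k, Sat φ (suffixW w j)
  | .freq e c p φ, w => c.rel (lr e (fun i => ind (Sat φ (suffixW w i)))) (p : ℝ)

/-- `U`-free formulas (the grammar `ξ` of the fragment). -/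
def UFree {Ap : Type} : FLTL Ap → Prop
  | .conj φ ψ => UFree φ ∧ UFree ψ
  | .disj φ ψ => UFree φ ∧ UFree ψ
  | .next φ => UFree φ
  | .fut φ => UFree φ
  | .glob φ => UFree φ
  | .freq _ _ _ φ => UFree φ
  | .untl _ _ => False
  | _ => True

/-- The fragment fLTL∖GU: no `U` inside the scope of `G` or `G^{⋈p}_ext`. -/
def InFrag {Ap : Type} : FLTL Ap → Prop
  | .conj φ ψ => InFrag φ ∧ InFrag ψ
  | .disj φ ψ => InFrag φ ∧ InFrag ψ
  | .next φ => InFrag φ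
  | .fut φ => InFrag φ
  | .untl φ ψ => InFrag φ ∧ InFrag ψ
  | .glob φ => UFree φ
  | .freq _ _ _ φ => UFree φ
  | _ => True

/-- One-step unfolding `Unf`. -/
def unf {Ap : Type} : FLTL Ap → FLTL Ap
  | .conj φ ψ => .conj (unf φ) (unf ψ)
  | .disj φ ψ => .disj (unf φ) (unf ψ)
  | .fut φ => .disj (unf φ) (.next (.fut φ))
  | .glob φ => .conj (unf φ) (.next (.glob φ))
  | .untl φ ψ => .disj (unf ψ) (.conj (unf φ) (.next (.untl φ ψ)))
  | .freq e c p φ => .conj .tt (.next (.freq e c p φ))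
  | φ => φ

/-- The next-step operator `ψ[ν]` for a letter `ν ⊆ Ap`. -/
def step {Ap : Type} : FLTL Ap → Set Ap → FLTL Ap
  | .conj φ ψ, ν => .conj (step φ ν) (step ψ ν)
  | .disj φ ψ, ν => .disj (step φ ν) (step ψ ν)
  | .atom a, ν => if a ∈ ν then .tt else .ff
  | .natom a, ν => if a ∈ ν then .ff else .tt
  | .next φ, _ => φ
  | φ, _ => φ

/-- Non-Boolean formulas: those that are not conjunctions or disjunctions. -/
def nonBool {Ap : Type} : FLTL Ap → Prop
  | .conj _ _ => False
  | .disj _ _ => False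
  | _ => True

/-- Extension of a propositional assignment (on non-Boolean formulas)
through conjunction and disjunction; `tt` and `ff` get their truth values. -/
def evalA {Ap : Type} (A : FLTL Ap → Prop) : FLTL Ap → Prop
  | .tt => True
  | .ff => False
  | .conj φ ψ => evalA A φ ∧ evalA A ψ
  | .disj φ ψ => evalA A φ ∨ evalA A ψ
  | φ => A φ

/-- Propositional provability `Φ ⊢ ψ`. -/
def pproves {Ap : Type} (Φ : Set (FLTL Ap)) (ψ : FLTL Ap) : Prop :=
  ∀ A : FLTL Ap → Prop, (∀ χ ∈ Φ, evalA A χ) → evalA A ψ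

/-- Propositional equivalence `≡_P`. -/
def pequiv {Ap : Type} (φ ψ : FLTL Ap) : Prop :=
  pproves {φ} ψ ∧ pproves {ψ} φ

/-- The set of subformulas of a formula (including itself). -/
def subf {Ap : Type} : FLTL Ap → Set (FLTL Ap)
  | .conj φ ψ => insert (.conj φ ψ) (subf φ ∪ subf ψ)
  | .disj φ ψ => insert (.disj φ ψ) (subf φ ∪ subf ψ)
  | .next φ => insert (.next φ) (subf φ)
  | .fut φ => insert (.fut φ) (subf φ)
  | .glob φ => insert (.glob φ) (subf φ)
  | .untl φ ψ => insert (.untl φ ψ) (subf φ ∪ subf ψ)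
  | .freq e c p φ => insert (.freq e c p φ) (subf φ)
  | φ => {φ}

/-- `sf(φ)`: the set of non-Boolean subformulas of `φ`. -/
def sfSet {Ap : Type} (φ : FLTL Ap) : Set (FLTL Ap) := {ψ ∈ subf φ | nonBool ψ}

/-- Formulas of the shapes `Fξ`, `Gξ`, `G^{⋈p}_ext ξ`. -/
def isRecShape {Ap : Type} : FLTL Ap → Prop
  | .fut _ => True
  | .glob _ => True
  | .freq _ _ _ _ => True
  | _ => False

/-- `Rec`: the set of `F`-, `G`-, and `G^{⋈p}_ext`-subformulas of `φ`. -/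
def RecSet {Ap : Type} (φ : FLTL Ap) : Set (FLTL Ap) := {ψ ∈ subf φ | isRecShape ψ}

/-- The defining condition of membership in `R(w)`. -/
def RsatCond {Ap : Type} (w : Word Ap) : FLTL Ap → Prop
  | .fut ξ => Sat (.glob (.fut ξ)) w
  | .glob ξ => Sat (.fut (.glob ξ)) w
  | .freq e c p ξ => Sat (.freq e c p ξ) w
  | _ => False

/-- `R(w)`: elements of `Rec` eventually always satisfied on `w`. -/
def Rsat {Ap : Type} (φ : FLTL Ap) (w : Word Ap) : Set (FLTL Ap) :=
  {ψ ∈ RecSet φ | RsatCond w ψ}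

/-- The threshold `T(w)`: the smallest `T` such that for all `t ≥ T` every
formula of `R(w)` holds at `w^t` and every formula of `Rec ∖ R(w)` fails at `w^t`. -/
def threshold {Ap : Type} (φ : FLTL Ap) (w : Word Ap) : ℕ :=
  sInf {T : ℕ | ∀ t, T ≤ t →
    (∀ ψ ∈ Rsat φ w, Sat ψ (suffixW w t)) ∧
    (∀ ψ ∈ RecSet φ, ψ ∉ Rsat φ w → ¬ Sat ψ (suffixW w t))}

/-- Sinks of slave transition systems: `ψ[ν] = ψ` for every letter `ν`. -/
def isSink {Ap : Type} (ψ : FLTL Ap) : Prop := ∀ ν : Set Ap, step ψ ν = ψ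

/-- Run of the slave LTS `S(ξ)` on a finite word: undefined (`none`) as soon as
a transition from a sink would be needed. -/
def slaveRunList {Ap : Type} : FLTL Ap → List (Set Ap) → Option (FLTL Ap)
  | ψ, [] => some ψ
  | ψ, ν :: rest => if isSink ψ then none else slaveRunList (step ψ ν) rest

/-- The finite word `w[i] w[i+1] ⋯ w[i+len-1]`. -/
def segWord {Ap : Type} (w : Word Ap) (i len : ℕ) : List (Set Ap) :=
  (List.range len).map (fun k => w (i + k))

/-- `S(ξ)(w[i..j])`: the state of the slave LTS after reading `w[i]⋯w[j]`. -/
def readSeg {Ap : Type} (ξ : FLTL Ap) (w : Word Ap) (i j : ℕ) : Option (FLTL Ap) :=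
  slaveRunList ξ (segWord w i (j + 1 - i))

/-- The state, at time `n`, of the slave token born at time `b`
(having read `w[b]⋯w[n-1]`). -/
def tokState {Ap : Type} (ξ : FLTL Ap) (w : Word Ap) (b n : ℕ) : Option (FLTL Ap) :=
  slaveRunList ξ (segWord w b (n - b))

/-- `Sat(R)`: positions from which the slave run reaches an `R`-provable state. -/
def SatSet {Ap : Type} (R : Set (FLTL Ap)) (ξ : FLTL Ap) (w : Word Ap) : Set ℕ :=
  {i | ∃ j ≥ i, ∃ ψ, readSeg ξ w i j = some ψ ∧ pproves R ψ}

/-- The token (subset-construction) run of the slave automata for `ξ` on `w`: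
at each step all non-sink tokens move and a fresh token is put on `ξ`. -/
def tokenSet {Ap : Type} (ξ : FLTL Ap) (w : Word Ap) : ℕ → Set (FLTL Ap)
  | 0 => {ξ}
  | n + 1 => insert ξ ((fun ψ => step ψ (w n)) '' {ψ ∈ tokenSet ξ w n | ¬ isSink ψ})

/-- Acceptance of the Büchi slave automaton `S_GF(ξ,R)`:
infinitely often some token lies in an accepting (R-provable) sink. -/
def buchiAcc {Ap : Type} (R : Set (FLTL Ap)) (ξ : FLTL Ap) (w : Word Ap) : Prop :=
  ∃ᶠ n in atTop, ∃ ψ ∈ tokenSet ξ w n, isSink ψ ∧ pproves R ψ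

/-- Acceptance of the co-Büchi slave automaton `S_FG(ξ,R)`:
only finitely often some token lies in a rejecting (non-R-provable) sink. -/
def coBuchiAcc {Ap : Type} (R : Set (FLTL Ap)) (ξ : FLTL Ap) (w : Word Ap) : Prop :=
  ∀ᶠ n in atTop, ¬ ∃ ψ ∈ tokenSet ξ w n, isSink ψ ∧ ¬ pproves R ψ

/-- The counting function (state of the mean-payoff slave automaton) at time `n`:
the number of tokens currently in state `ψ`. -/
def tokenCount {Ap : Type} (ξ : FLTL Ap) (w : Word Ap) (n : ℕ) (ψ : FLTL Ap) : ℕ :=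
  ((Finset.range (n + 1)).filter (fun b => tokState ξ w b n = some ψ)).card

/-- The reward `r(R)` of a counting state: total number of tokens in
accepting (R-provable) sinks. -/
def mpRewardFn {Ap : Type} (R : Set (FLTL Ap)) (f : FLTL Ap → ℕ) : ℝ :=
  ∑' ψ : {χ : FLTL Ap // isSink χ ∧ pproves R χ}, (f ψ.1 : ℝ)

/-- Acceptance of the mean-payoff slave automaton `S_{G^{⋈p}_ext}(ξ,R)`. -/
def mpAcc {Ap : Type} (R : Set (FLTL Ap)) (ξ : FLTL Ap) (w : Word Ap)
    (e : Ext) (c : Cmp) (p : ℚ) : Prop :=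
  c.rel (lr e (fun n => mpRewardFn R (tokenCount ξ w n))) (p : ℝ)

/-- Acceptance of the slave automaton for a formula of `Rec`, with assumptions `R`. -/
def slaveAccept {Ap : Type} (R : Set (FLTL Ap)) (w : Word Ap) : FLTL Ap → Prop
  | .fut ξ => buchiAcc R ξ w
  | .glob ξ => coBuchiAcc R ξ w
  | .freq e c p ξ => mpAcc R ξ w e c p
  | _ => True

/-- `w ∈ L(P(R))`: the product of the slaves accepts `w` with the condition
`Acc(R) = ⋀_{ξ ∈ R} Acc_ξ(R)`. -/
def productAccept {Ap : Type} (R : Set (FLTL Ap)) (w : Word Ap) : Prop :=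
  ∀ ψ ∈ R, slaveAccept R w ψ

/-- The run of the master transition system on `w`. -/
def masterRun {Ap : Type} (φ : FLTL Ap) (w : Word Ap) : ℕ → FLTL Ap
  | 0 => φ
  | n + 1 => step (unf (masterRun φ w n)) (w n)

/-- The propositional substitution `χ[X/ff]`: replace each non-Boolean
formula belonging to `X` by `ff`. -/
def substFF {Ap : Type} (X : Set (FLTL Ap)) : FLTL Ap → FLTL Ap
  | .conj φ ψ => .conj (substFF X φ) (substFF X ψ)
  | .disj φ ψ => .disj (substFF X φ) (substFF X ψ)
  | φ => if φ ∈ X then .ff else φ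

/-- The master acceptance condition `Acc_M(R)`: eventually, the current master
formula is provable from `R` together with all tokens of the slaves of
`G`-formulas of `R`, with `Rec ∖ R` substituted by `ff`. -/
def masterAcc {Ap : Type} (φ : FLTL Ap) (R : Set (FLTL Ap)) (w : Word Ap) : Prop :=
  ∀ᶠ n in atTop,
    pproves
      (R ∪ ⋃ (ξ : FLTL Ap) (_ : FLTL.glob ξ ∈ R),
        substFF (RecSet φ \ R) '' tokenSet ξ w n)
      (masterRun φ w n)

/-- `w ∈ L(A)` for the final automaton `A` (master × slave product) of `φ`. -/
def finalAccept {Ap : Type} (φ : FLTL Ap) (w : Word Ap) : Prop :=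
  ∃ R ⊆ RecSet φ, masterAcc φ R w ∧ productAccept R w

section

variable {A : Type*}

def empFreq (aseq : ℕ → A) (N : ℕ) (a : A) : ℝ :=
  (∑ j ∈ Finset.range N, ind (aseq j = a)) / N

lemma ind_nonneg (P : Prop) : 0 ≤ ind P := by
  unfold ind; split <;> norm_num

lemma ind_le_one (P : Prop) : ind P ≤ 1 := by
  unfold ind; split <;> norm_num

lemma empFreq_nonneg (aseq : ℕ → A) (N : ℕ) (a : A) : 0 ≤ empFreq aseq N a :=
  div_nonneg (Finset.sum_nonneg fun _ _ => ind_nonneg _) N.cast_nonneg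

lemma empFreq_le_one (aseq : ℕ → A) (N : ℕ) (a : A) : empFreq aseq N a ≤ 1 := by
  refine div_le_one_of_le₀ ?_ N.cast_nonneg
  calc ∑ j ∈ Finset.range N, ind (aseq j = a) ≤ ∑ _j ∈ Finset.range N, (1 : ℝ) :=
        Finset.sum_le_sum fun _ _ => ind_le_one _
    _ = N := by simp

lemma exists_subseq_tendsto_empFreq [Countable A] (aseq : ℕ → A) (x : ℕ → ℕ) :
    ∃ f : A → ℝ, ∃ φ : ℕ → ℕ, StrictMono φ ∧
      Tendsto (fun m => empFreq aseq (x (φ m))) atTop (nhds f) := by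
  obtain ⟨f, -, φ, hφ, hf⟩ := (isCompact_univ_pi fun _ : A => isCompact_Icc).tendsto_subseq
    (x := fun m => empFreq aseq (x m))
    fun _ a _ => ⟨empFreq_nonneg aseq _ a, empFreq_le_one aseq _ a⟩
  exact ⟨f, φ, hφ, hf⟩

variable [Fintype A]

lemma sum_empFreq_mul (aseq : ℕ → A) (h : A → ℝ) (N : ℕ) :
    ∑ a, empFreq aseq N a * h a = cesaro (fun j => h (aseq j)) N := by
  simp only [empFreq, cesaro, div_mul_eq_mul_div, Finset.sum_mul, ← Finset.sum_div]
  rw [Finset.sum_comm]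
  congr 1
  refine Finset.sum_congr rfl fun j _ => ?_
  simp [ind, ite_mul, Finset.sum_ite_eq]

lemma sum_empFreq (aseq : ℕ → A) {N : ℕ} (hN : N ≠ 0) : ∑ a, empFreq aseq N a = 1 := by
  simpa [cesaro, hN] using sum_empFreq_mul aseq (fun _ => 1) N

lemma abs_cesaro_comp_le (aseq : ℕ → A) (h : A → ℝ) (N : ℕ) :
    |cesaro (fun j => h (aseq j)) N| ≤ ∑ a, |h a| := by
  rw [← sum_empFreq_mul]
  refine (Finset.abs_sum_le_sum_abs _ _).trans (Finset.sum_le_sum fun a _ => ?_)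
  rw [abs_mul, abs_of_nonneg (empFreq_nonneg aseq N a)]
  exact mul_le_of_le_one_left (abs_nonneg _) (empFreq_le_one aseq N a)

lemma isBoundedUnder_cesaro_comp (aseq : ℕ → A) (h : A → ℝ) :
    IsBoundedUnder (· ≤ ·) atTop (cesaro fun j => h (aseq j)) ∧
      IsBoundedUnder (· ≥ ·) atTop (cesaro fun j => h (aseq j)) :=
  isBoundedUnder_le_abs.mp (isBoundedUnder_of ⟨_, abs_cesaro_comp_le aseq h⟩)

lemma tendsto_cesaro_comp_of_tendsto_empFreq {ι : Type*} {l : Filter ι} (aseq : ℕ → A)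
    {T : ι → ℕ} {f : A → ℝ} (hf : Tendsto (fun i => empFreq aseq (T i)) l (nhds f))
    (h : A → ℝ) :
    Tendsto (fun i => cesaro (fun j => h (aseq j)) (T i)) l (nhds (∑ a, f a * h a)) := by
  simp only [← sum_empFreq_mul]
  exact tendsto_finsetSum _ fun a _ => (tendsto_pi_nhds.mp hf a).mul_const (h a)

end

lemma exists_strictMono_comp_pos {y : ℕ → ℕ} (hy : Tendsto y atTop atTop) :
    ∃ ψ : ℕ → ℕ, StrictMono ψ ∧ StrictMono (y ∘ ψ) ∧ ∀ n, 0 < y (ψ n) := by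
  obtain ⟨ψ, hψ, hyψ⟩ := strictMono_subseq_of_tendsto_atTop hy
  exact ⟨fun n => ψ (n + 1), hψ.comp add_left_strictMono, hyψ.comp add_left_strictMono,
    fun n => (Nat.zero_le _).trans_lt (hyψ n.succ_pos)⟩

lemma liminf_le_of_tendsto_comp {ι β : Type*} [ConditionallyCompleteLinearOrder β]
    [TopologicalSpace β] [OrderTopology β] {l : Filter ι} [l.NeBot] {u : ℕ → β} {T : ι → ℕ}
    {x : β} (hT : Tendsto T l atTop) (hu : IsBoundedUnder (· ≥ ·) atTop u)
    (hx : Tendsto (u ∘ T) l (nhds x)) : liminf u atTop ≤ x :=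
  (hT.liminf_le_liminf_comp hx.isBoundedUnder_le.isCoboundedUnder_ge hu).trans_eq hx.liminf_eq

theorem frequency_subsequence_general {A : Type} [Fintype A]
    (aseq : ℕ → A) (q : A → ℝ) (n : ℕ) (r : Fin n → A → ℝ) :
    ∃ T : ℕ → ℕ, StrictMono T ∧ (∀ ℓ, 0 < T ℓ) ∧
      ∃ f : A → ℝ,
        (∀ a : A, Filter.Tendsto
          (fun ℓ => (∑ j ∈ Finset.range (T ℓ), ind (aseq j = a)) / (T ℓ : ℝ))
          Filter.atTop (nhds (f a))) ∧
        (∀ a : A, 0 ≤ f a) ∧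
        (∑ a : A, f a = 1) ∧
        (∑ a : A, f a * q a
          = Filter.limsup (cesaro (fun j => q (aseq j))) Filter.atTop) ∧
        (∀ k : Fin n, ∑ a : A, f a * r k a
          ≥ Filter.liminf (cesaro (fun j => r k (aseq j))) Filter.atTop) := by
  obtain ⟨hq_le, hq_ge⟩ := isBoundedUnder_cesaro_comp aseq q
  obtain ⟨x, hxL, hx⟩ := exists_seq_tendsto_limsup hq_ge.isCoboundedUnder_le hq_le
  obtain ⟨f, φ, hφ, hf⟩ := exists_subseq_tendsto_empFreq aseq x
  obtain ⟨ψ, hψ, hT, hTpos⟩ := exists_strictMono_comp_pos (hx.comp hφ.tendsto_atTop)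
  have hfT : Tendsto (fun ℓ => empFreq aseq (x (φ (ψ ℓ)))) atTop (nhds f) :=
    hf.comp hψ.tendsto_atTop
  have hcesaro := tendsto_cesaro_comp_of_tendsto_empFreq aseq hfT
  refine ⟨x ∘ φ ∘ ψ, hT, hTpos, f, tendsto_pi_nhds.mp hfT,
    fun a => ge_of_tendsto' (tendsto_pi_nhds.mp hfT a) fun _ => empFreq_nonneg aseq _ a,
    ?_, ?_, fun k => ?_⟩
  · refine tendsto_nhds_unique (tendsto_finsetSum _ fun a _ => tendsto_pi_nhds.mp hfT a) ?_
    exact tendsto_const_nhds.congr fun ℓ => (sum_empFreq aseq (hTpos ℓ).ne').symm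
  · exact tendsto_nhds_unique (hcesaro q) (hxL.comp (hφ.comp hψ).tendsto_atTop)
  · exact liminf_le_of_tendsto_comp hT.tendsto_atTop
      (isBoundedUnder_cesaro_comp aseq (r k)).2 (hcesaro (r k))

/-- Lemma (subsequence of frequencies): along a suitable subsequence of times,
the action frequencies converge, sum to one, realize the limsup of the
`q`-averages exactly, and dominate the liminfs of the `r_k`-averages. -/
theorem frequency_subsequence {A : Type} [Fintype A] [Nonempty A]
    (aseq : ℕ → A) (q : A → ℝ) (n : ℕ) (r : Fin n → A → ℝ) :
    ∃ T : ℕ → ℕ, StrictMono T ∧ (∀ ℓ, 0 < T ℓ) ∧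
      ∃ f : A → ℝ,
        (∀ a : A, Filter.Tendsto
          (fun ℓ => (∑ j ∈ Finset.range (T ℓ), ind (aseq j = a)) / (T ℓ : ℝ))
          Filter.atTop (nhds (f a))) ∧
        (∀ a : A, 0 ≤ f a) ∧
        (∑ a : A, f a = 1) ∧
        (∑ a : A, f a * q a
          = Filter.limsup (cesaro (fun j => q (aseq j))) Filter.atTop) ∧
        (∀ k : Fin n, ∑ a : A, f a * r k a
          ≥ Filter.liminf (cesaro (fun j => r k (aseq j))) Filter.atTop) :=
  frequency_subsequence_general aseq q n r

end Paper

end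
end

section
/- For every bounded sequence a : ℕ → ℝ, the liminf and limsup of the Cesàro averages are shift-invariant: liminf_{n→∞} (1/n) Σ_{j<n} a_{j+1} = liminf_{n→∞} (1/n) Σ_{j<n} a_j and limsup_{n→∞} (1/n) Σ_{j<n} a_{j+1} = limsup_{n→∞} (1/n) Σ_{j<n} a_j. Consequently, for every infinite word w over 2^{Ap} and every fLTL formula ψ: w ⊨ G^{⋈p}_ext ψ if and only if w^1 ⊨ G^{⋈p}_ext ψ. -/
open Filter

attribute [local instance] Classical.propDecidable

noncomputable section

namespace Paper

/-! Since `∑_{j<n} a (j+1) = ∑_{j<n} a j + a n - a 0`, the Cesàro averages of the shifted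
sequence differ from those of `a` by `(a n - a 0) / n`, which tends to `0` when `a` is bounded;
and adding a null sequence to a bounded real sequence changes neither its liminf nor its limsup.
The indicator sequence of `ψ` along `w^1` is the shift of that along `w`. -/

section LimsupPerturbation

variable {ι : Type*} {f : Filter ι} [f.NeBot] {u v : ι → ℝ}

theorem limsup_add_of_tendsto_zero (hu₁ : IsBoundedUnder (· ≤ ·) f u)
    (hu₂ : IsBoundedUnder (· ≥ ·) f u) (hv : Tendsto v f (nhds 0)) :
    limsup (u + v) f = limsup u f := by
  apply le_antisymm
  · simpa [hv.limsup_eq] using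
      limsup_add_le hu₂ hu₁ hv.isBoundedUnder_ge.isCoboundedUnder_le hv.isBoundedUnder_le
  · simpa [hv.liminf_eq] using
      le_limsup_add hu₁ hu₂.isCoboundedUnder_le hv.isBoundedUnder_le hv.isBoundedUnder_ge

theorem liminf_add_of_tendsto_zero (hu₁ : IsBoundedUnder (· ≤ ·) f u)
    (hu₂ : IsBoundedUnder (· ≥ ·) f u) (hv : Tendsto v f (nhds 0)) :
    liminf (u + v) f = liminf u f := by
  apply le_antisymm
  · simpa [add_comm, hv.limsup_eq] using
      liminf_add_le hv.isBoundedUnder_ge hv.isBoundedUnder_le hu₂ hu₁.isCoboundedUnder_ge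
  · simpa [hv.liminf_eq] using
      le_liminf_add hu₂ hu₁ hv.isBoundedUnder_ge hv.isBoundedUnder_le.isCoboundedUnder_ge

end LimsupPerturbation

section CesaroShift

variable {a : ℕ → ℝ} {C : ℝ}

theorem cesaro_shift_eq_add :
    cesaro (fun j => a (j + 1)) = cesaro a + fun n => (a n - a 0) / n := by
  funext n
  have hsum : ∑ j ∈ Finset.range n, a (j + 1) = ∑ j ∈ Finset.range n, a j + a n - a 0 := by
    rw [← Finset.sum_range_succ, Finset.sum_range_succ']
    ring
  rw [Pi.add_apply, cesaro, cesaro, hsum, add_sub_assoc, add_div]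

theorem abs_cesaro_le (hC : ∀ j, |a j| ≤ C) (n : ℕ) : |cesaro a n| ≤ C := by
  rcases Nat.eq_zero_or_pos n with rfl | hn
  · simpa [cesaro] using (abs_nonneg _).trans (hC 0)
  have hn' : (0 : ℝ) < n := by exact_mod_cast hn
  rw [cesaro, abs_div, abs_of_pos hn', div_le_iff₀ hn']
  calc |∑ j ∈ Finset.range n, a j| ≤ ∑ j ∈ Finset.range n, |a j| := Finset.abs_sum_le_sum_abs _ _
    _ ≤ ∑ _j ∈ Finset.range n, C := Finset.sum_le_sum fun j _ => hC j
    _ = C * n := by simp [mul_comm]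

theorem tendsto_sub_div_natCast_zero (hC : ∀ j, |a j| ≤ C) :
    Tendsto (fun n : ℕ => (a n - a 0) / n) atTop (nhds 0) := by
  have hbound : ∀ n, |a n - a 0| ≤ 2 * C := fun n =>
    (abs_sub _ _).trans (by linarith [hC n, hC 0])
  exact tendsto_bdd_div_atTop_nhds_zero
    (Eventually.of_forall fun n => (abs_le.1 (hbound n)).1)
    (Eventually.of_forall fun n => (abs_le.1 (hbound n)).2) tendsto_natCast_atTop_atTop

theorem isBoundedUnder_le_cesaro (hC : ∀ j, |a j| ≤ C) :
    IsBoundedUnder (· ≤ ·) atTop (cesaro a) :=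
  isBoundedUnder_of ⟨C, fun n => (abs_le.1 (abs_cesaro_le hC n)).2⟩

theorem isBoundedUnder_ge_cesaro (hC : ∀ j, |a j| ≤ C) :
    IsBoundedUnder (· ≥ ·) atTop (cesaro a) :=
  isBoundedUnder_of ⟨-C, fun n => (abs_le.1 (abs_cesaro_le hC n)).1⟩

theorem limsup_cesaro_shift (hC : ∀ j, |a j| ≤ C) :
    limsup (cesaro (fun j => a (j + 1))) atTop = limsup (cesaro a) atTop := by
  rw [cesaro_shift_eq_add]
  exact limsup_add_of_tendsto_zero
    (isBoundedUnder_le_cesaro hC) (isBoundedUnder_ge_cesaro hC) (tendsto_sub_div_natCast_zero hC)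

theorem liminf_cesaro_shift (hC : ∀ j, |a j| ≤ C) :
    liminf (cesaro (fun j => a (j + 1))) atTop = liminf (cesaro a) atTop := by
  rw [cesaro_shift_eq_add]
  exact liminf_add_of_tendsto_zero
    (isBoundedUnder_le_cesaro hC) (isBoundedUnder_ge_cesaro hC) (tendsto_sub_div_natCast_zero hC)

theorem lr_shift (e : Ext) (hC : ∀ j, |a j| ≤ C) : lr e (fun j => a (j + 1)) = lr e a := by
  cases e
  · exact liminf_cesaro_shift hC
  · exact limsup_cesaro_shift hC

end CesaroShift

theorem abs_ind_le_one (P : Prop) : |ind P| ≤ 1 := by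
  unfold ind
  split_ifs <;> simp

theorem suffixW_suffixW {Ap : Type} (w : Word Ap) (k i : ℕ) :
    suffixW (suffixW w k) i = suffixW w (k + i) := by
  funext m
  simp only [suffixW, add_assoc]

theorem cesaro_shift_invariant_general {Ap : Type} :
    (∀ a : ℕ → ℝ, (∃ C, ∀ j, |a j| ≤ C) →
      Filter.liminf (cesaro (fun j => a (j + 1))) Filter.atTop
          = Filter.liminf (cesaro a) Filter.atTop ∧
      Filter.limsup (cesaro (fun j => a (j + 1))) Filter.atTop
          = Filter.limsup (cesaro a) Filter.atTop) ∧
    (∀ (w : Word Ap) (ψ : FLTL Ap) (e : Ext) (c : Cmp) (p : ℚ),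
      Sat (.freq e c p ψ) w ↔ Sat (.freq e c p ψ) (suffixW w 1)) := by
  refine ⟨fun a ⟨C, hC⟩ => ⟨liminf_cesaro_shift hC, limsup_cesaro_shift hC⟩,
    fun w ψ e c p => ?_⟩
  have hsuffix : (fun i => ind (Sat ψ (suffixW (suffixW w 1) i)))
      = fun i => ind (Sat ψ (suffixW w (i + 1))) := by
    simp only [suffixW_suffixW, add_comm 1]
  simp only [Sat, hsuffix, lr_shift e fun i => abs_ind_le_one (Sat ψ (suffixW w i))]

/-- Shift invariance of Cesàro liminf/limsup for bounded sequences, and hence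
of the frequency-globally operators. -/
theorem cesaro_shift_invariant {Ap : Type} [Fintype Ap] :
    (∀ a : ℕ → ℝ, (∃ C, ∀ j, |a j| ≤ C) →
      Filter.liminf (cesaro (fun j => a (j + 1))) Filter.atTop
          = Filter.liminf (cesaro a) Filter.atTop ∧
      Filter.limsup (cesaro (fun j => a (j + 1))) Filter.atTop
          = Filter.limsup (cesaro a) Filter.atTop) ∧
    (∀ (w : Word Ap) (ψ : FLTL Ap) (e : Ext) (c : Cmp) (p : ℚ),
      Sat (.freq e c p ψ) w ↔ Sat (.freq e c p ψ) (suffixW w 1)) :=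
  cesaro_shift_invariant_general

end Paper

end
end
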